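/- arXiv:1804.06906 — 5 statements merged into one kernel-verified Lean document; each statement's English description precedes it below -/
import Mathlib

section
/- For any positive integer n, 1/(12n+1) < log(n!) − (1/2)log(2πn) − n log n + n < 1/(12n). -/
/-!
Write `a n = log (stirlingSeq n) = log n! - ½ log (2n) - n log (n / e)`. For `n ≥ 1`,
`a n - a (n + 1) = ∑_{k ≥ 1} r ^ k / (2k + 1)` with `r = 1 / (2n + 1)²`. Bounding `1 / (2k + 1)`
by `1 / 3` gives the geometric series `r / (3 (1 - r)) = 1 / (12n) - 1 / (12(n + 1))`, and the
first two terms alone already exceed `1 / (12n + 1) - 1 / (12n + 13)`. Hence `a n - 1 / (12n)`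
increases strictly and `a n - 1 / (12n + 1)` decreases strictly, both towards `log √π`, and the
quantity bounded in the theorem is `a n - log √π`.
-/

open Real Nat Filter Topology

theorem sub_lt_of_sub_succ_lt_of_tendsto {a g : ℕ → ℝ} {L : ℝ}
    (hstep : ∀ n, a n - a (n + 1) < g n - g (n + 1))
    (ha : Tendsto a atTop (𝓝 L)) (hg : Tendsto g atTop (𝓝 0)) (n : ℕ) : a n - g n < L := by
  have hmono : StrictMono (a - g) :=
    strictMono_nat_of_lt_succ fun n => by simp only [Pi.sub_apply]; linarith [hstep n]
  have hlim : Tendsto (a - g) atTop (𝓝 L) := by rw [← sub_zero L]; exact ha.sub hg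
  exact (hmono n.lt_succ_self).trans_le (hmono.monotone.ge_of_tendsto hlim _)

theorem lt_sub_of_sub_succ_lt_of_tendsto {a g : ℕ → ℝ} {L : ℝ}
    (hstep : ∀ n, g n - g (n + 1) < a n - a (n + 1))
    (ha : Tendsto a atTop (𝓝 L)) (hg : Tendsto g atTop (𝓝 0)) (n : ℕ) : L < a n - g n := by
  have := sub_lt_of_sub_succ_lt_of_tendsto (a := -a) (g := -g)
    (fun n => by simp only [Pi.neg_apply]; linarith [hstep n]) ha.neg
    (by rw [← neg_zero]; exact hg.neg) n
  simp only [Pi.neg_apply] at this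
  linarith

theorem tendsto_one_div_twelve_mul_succ_add (c : ℝ) :
    Tendsto (fun n : ℕ => 1 / (12 * ((n : ℝ) + 1) + c)) atTop (𝓝 0) :=
  tendsto_const_nhds.div_atTop <| tendsto_atTop_add_const_right _ _ <|
    (tendsto_atTop_add_const_right _ _ tendsto_natCast_atTop_atTop).const_mul_atTop (by norm_num)

namespace Stirling

theorem tendsto_log_stirlingSeq_succ :
    Tendsto (fun n : ℕ => log (stirlingSeq (n + 1))) atTop (𝓝 (log √π)) :=
  ((continuousAt_log (by positivity)).tendsto.comp tendsto_stirlingSeq_sqrt_pi).comp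
    (tendsto_add_atTop_nat 1)

theorem log_stirlingSeq_sub_succ_lt (n : ℕ) :
    log (stirlingSeq (n + 1)) - log (stirlingSeq (n + 2)) <
      1 / (12 * ((n : ℝ) + 1)) - 1 / (12 * ((n : ℝ) + 2)) := by
  have hseries := log_stirlingSeq_sdiff_hasSum n
  push_cast at hseries
  set r : ℝ := (1 / (2 * ((n : ℝ) + 1) + 1)) ^ 2 with hr
  have hr0 : 0 < r := by positivity
  have hr1 : r < 1 := by
    rw [hr, one_div, inv_pow]
    exact inv_lt_one_of_one_lt₀ (one_lt_pow₀ (by linarith [n.cast_nonneg (α := ℝ)]) two_ne_zero)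
  have hgeom : HasSum (fun j : ℕ => 1 / 3 * r ^ (j + 1)) (r / 3 * (1 - r)⁻¹) := by
    convert (hasSum_geometric_of_lt_one hr0.le hr1).mul_left (r / 3) using 2 with j
    · rfl
    · ring
  have hgeom_sum : r / 3 * (1 - r)⁻¹ = 1 / (12 * ((n : ℝ) + 1)) - 1 / (12 * ((n : ℝ) + 2)) := by
    have : (2 * ((n : ℝ) + 1) + 1) ^ 2 - 1 ≠ 0 := by nlinarith [n.cast_nonneg (α := ℝ)]
    rw [hr]
    field_simp
    ring
  rw [← hgeom_sum]
  refine hasSum_lt (i := 1) (fun j => ?_) ?_ hseries hgeom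
  · gcongr
    linarith [j.cast_nonneg (α := ℝ)]
  · exact mul_lt_mul_of_pos_right (by norm_num) (pow_pos hr0 _)

theorem lt_log_stirlingSeq_sub_succ (n : ℕ) :
    1 / (12 * ((n : ℝ) + 1) + 1) - 1 / (12 * ((n : ℝ) + 2) + 1) <
      log (stirlingSeq (n + 1)) - log (stirlingSeq (n + 2)) := by
  have hseries := log_stirlingSeq_sdiff_hasSum n
  push_cast at hseries
  refine lt_of_lt_of_le ?_ (sum_le_hasSum (Finset.range 2) (fun j _ => by positivity) hseries)
  simp only [Finset.sum_range_succ, Finset.sum_range_zero]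
  norm_num
  set x : ℝ := 2 * ((n : ℝ) + 1) + 1 with hx
  have hx3 : 3 ≤ x := by linarith [n.cast_nonneg (α := ℝ)]
  rw [show 12 * ((n : ℝ) + 1) + 1 = 6 * x - 5 by rw [hx]; ring,
    show 12 * ((n : ℝ) + 2) + 1 = 6 * x + 7 by rw [hx]; ring,
    inv_sub_inv (by linarith) (by linarith), div_lt_iff₀ (by nlinarith)]
  -- After clearing denominators: `60x³ - 67x² + 36x - 105 > 0`.
  field_simp
  nlinarith [pow_le_pow_left₀ (by norm_num) hx3 3, pow_le_pow_left₀ (by norm_num) hx3 2]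

theorem log_stirlingSeq_sub_log_sqrt_pi {n : ℕ} (hn : n ≠ 0) :
    log (stirlingSeq n) - log √π =
      Real.log n ! - 1 / 2 * Real.log (2 * π * n) - n * Real.log n + n := by
  have hn' : (0 : ℝ) < n := by positivity
  rw [log_stirlingSeq_formula, log_div hn'.ne' (exp_ne_zero 1), log_exp, log_sqrt pi_pos.le,
    log_mul (by positivity) hn'.ne', log_mul (by positivity) hn'.ne',
    log_mul two_ne_zero pi_ne_zero]
  ring

end Stirling

open Stirling in
/-- Robbins' form of Stirling's approximation. -/
theorem stmt_7 (n : ℕ) (hn : 0 < n) :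
    1 / (12 * (n : ℝ) + 1) <
        Real.log (n !) - (1 / 2) * Real.log (2 * Real.pi * n) - n * Real.log n + n ∧
      Real.log (n !) - (1 / 2) * Real.log (2 * Real.pi * n) - n * Real.log n + n <
        1 / (12 * (n : ℝ)) := by
  obtain ⟨m, rfl⟩ := Nat.exists_eq_add_one_of_ne_zero hn.ne'
  rw [← log_stirlingSeq_sub_log_sqrt_pi (Nat.succ_ne_zero m)]
  have hlower := lt_sub_of_sub_succ_lt_of_tendsto (g := fun n => 1 / (12 * ((n : ℝ) + 1) + 1))
    (fun k => by
      push_cast; simpa only [add_assoc, one_add_one_eq_two] using lt_log_stirlingSeq_sub_succ k)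
    tendsto_log_stirlingSeq_succ (tendsto_one_div_twelve_mul_succ_add 1) m
  have hupper := sub_lt_of_sub_succ_lt_of_tendsto (g := fun n => 1 / (12 * ((n : ℝ) + 1)))
    (fun k => by
      push_cast; simpa only [add_assoc, one_add_one_eq_two] using log_stirlingSeq_sub_succ_lt k)
    tendsto_log_stirlingSeq_succ (by simpa using tendsto_one_div_twelve_mul_succ_add 0) m
  push_cast
  constructor <;> linarith
end

section
/- Let n_1,...,n_{k+1} be nonnegative integers summing to n with max_i n_i < n. Then (n!/n^n) ∏_{j : n_j > 0} n_j^{n_j}/n_j! ≤ (n^{1/2}/(2π)^{1/2}) ∏_{j : n_j>0} n_j^{-1/2} < n^{1/2}. -/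
open Finset Nat Real

/-! For `a ≥ 1` write `a! = σ(a) √a (a/e)^a` (`σ = stirlingRatio`); by Stirling's formula `σ`
decreases to `√(2π)`.
Substituting this into the left-hand side, the powers of `e` cancel because `∑ nⱼ = n`, leaving
`σ(n) / ∏ σ(nⱼ)` times `√n ∏ nⱼ^{-1/2}`. Since `max nⱼ < n`, at least two `nⱼ` are positive: for one
of them `σ(nⱼ) ≥ σ(n)`, for another `σ(nⱼ) ≥ √(2π)`, and all other factors are `≥ √(2π) > 1`. -/

noncomputable def stirlingRatio (a : ℕ) : ℝ := a ! / (√a * (a / exp 1) ^ a)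

lemma stirlingRatio_eq_sqrt_two_mul_stirlingSeq (a : ℕ) :
    stirlingRatio a = √2 * Stirling.stirlingSeq a := by
  rcases a.eq_zero_or_pos with rfl | ha
  · simp [stirlingRatio]
  · have : (0 : ℝ) < a := by exact_mod_cast ha
    rw [stirlingRatio, Stirling.stirlingSeq, sqrt_mul zero_le_two]
    field_simp

lemma stirlingRatio_nonneg (a : ℕ) : 0 ≤ stirlingRatio a := by
  unfold stirlingRatio; positivity

lemma sqrt_two_pi_le_stirlingRatio {a : ℕ} (ha : a ≠ 0) : √(2 * π) ≤ stirlingRatio a := by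
  rw [stirlingRatio_eq_sqrt_two_mul_stirlingSeq, sqrt_mul zero_le_two]
  exact mul_le_mul_of_nonneg_left (Stirling.sqrt_pi_le_stirlingSeq ha) (sqrt_nonneg 2)

lemma stirlingRatio_antitoneOn : AntitoneOn stirlingRatio (Set.Ici 1) := by
  intro a ha b hb hab
  obtain ⟨a, rfl⟩ := Nat.exists_eq_add_of_le' (Set.mem_Ici.1 ha)
  obtain ⟨b, rfl⟩ := Nat.exists_eq_add_of_le' (Set.mem_Ici.1 hb)
  simp only [stirlingRatio_eq_sqrt_two_mul_stirlingSeq]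
  exact mul_le_mul_of_nonneg_left (Stirling.stirlingSeq'_antitone (by omega : a ≤ b))
    (sqrt_nonneg 2)

lemma one_lt_sqrt_two_pi : 1 < √(2 * π) := by
  rw [lt_sqrt zero_le_one]
  linarith [pi_gt_three]

lemma factorial_div_pow_self_eq {a : ℕ} (ha : a ≠ 0) :
    (a ! : ℝ) / a ^ a = stirlingRatio a * √a / exp 1 ^ a := by
  have : (0 : ℝ) < a := by exact_mod_cast pos_of_ne_zero ha
  rw [stirlingRatio, div_pow]
  field_simp

lemma factorial_div_pow_self_mul_prod_eq {ι : Type*} {s : Finset ι} {m : ι → ℕ} {n : ℕ}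
    (hm : ∀ i ∈ s, m i ≠ 0) (hn : n ≠ 0) (hsum : ∑ i ∈ s, m i = n) :
    (n ! : ℝ) / n ^ n * ∏ i ∈ s, ((m i : ℝ) ^ m i / (m i)!) =
      (stirlingRatio n / ∏ i ∈ s, stirlingRatio (m i)) * (√n * ∏ i ∈ s, (1 / √(m i))) := by
  have hfactor : ∀ i ∈ s, (m i : ℝ) ^ m i / (m i)! =
      (stirlingRatio (m i) * √(m i) / exp 1 ^ m i)⁻¹ := fun i hi => by
    rw [← factorial_div_pow_self_eq (hm i hi), inv_div]
  rw [prod_congr rfl hfactor, prod_inv_distrib, prod_div_distrib, prod_mul_distrib,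
    prod_pow_eq_pow_sum, hsum, factorial_div_pow_self_eq hn]
  simp only [one_div, prod_inv_distrib]
  field_simp

lemma sqrt_two_pi_mul_stirlingRatio_le_prod {ι : Type*} {s : Finset ι} {m : ι → ℕ} {n : ℕ}
    (hm : ∀ k ∈ s, m k ≠ 0) (hle : ∀ k ∈ s, m k ≤ n) {i j : ι} (hi : i ∈ s) (hj : j ∈ s)
    (hij : i ≠ j) :
    √(2 * π) * stirlingRatio n ≤ ∏ k ∈ s, stirlingRatio (m k) := by
  classical
  have hmj : 1 ≤ m j := one_le_iff_ne_zero.2 (hm j hj)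
  calc √(2 * π) * stirlingRatio n ≤ stirlingRatio (m i) * stirlingRatio (m j) :=
        mul_le_mul (sqrt_two_pi_le_stirlingRatio (hm i hi))
          (stirlingRatio_antitoneOn hmj (hmj.trans (hle j hj)) (hle j hj))
          (stirlingRatio_nonneg n) (stirlingRatio_nonneg _)
    _ = ∏ k ∈ {i, j}, stirlingRatio (m k) := by rw [prod_pair hij]
    _ ≤ ∏ k ∈ s, stirlingRatio (m k) :=
        prod_le_prod_of_subset_of_one_le (insert_subset hi (singleton_subset_iff.2 hj))
          (fun k _ => stirlingRatio_nonneg _)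
          (fun k hk _ => one_lt_sqrt_two_pi.le.trans (sqrt_two_pi_le_stirlingRatio (hm k hk)))

lemma exists_ne_pos_of_sum_eq {ι : Type*} [Fintype ι] [Nonempty ι] {t : ι → ℕ} {n : ℕ}
    (hsum : ∑ j, t j = n) (hmax : ∀ j, t j < n) : ∃ i j, i ≠ j ∧ 0 < t i ∧ 0 < t j := by
  obtain ⟨j₀⟩ := ‹Nonempty ι›
  obtain ⟨i, -, hi⟩ := exists_ne_zero_of_sum_ne_zero (s := univ) (f := t)
    (by have := hmax j₀; omega)
  by_contra! h
  have : ∑ j, t j = t i := sum_eq_single i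
    (fun j _ hji => by have := h i j hji.symm (pos_of_ne_zero hi); omega) (by simp)
  have := hmax i
  omega

lemma prod_one_div_sqrt_le_one {ι : Type*} {s : Finset ι} {m : ι → ℕ} (hm : ∀ i ∈ s, m i ≠ 0) :
    ∏ i ∈ s, (1 / √(m i)) ≤ 1 :=
  prod_le_one (fun _ _ => by positivity) fun i hi =>
    div_le_one_of_le₀ (one_le_sqrt.2 (by exact_mod_cast one_le_iff_ne_zero.2 (hm i hi)))
      (sqrt_nonneg _)

/-- If `t 1, …, t (k+1)` are nonnegative integers summing to `n` with each `t j < n`, then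
`(n!/n^n) ∏_{j : t j > 0} (t j)^{t j}/(t j)! ≤ (√n/√(2π)) ∏_{j : t j > 0} (t j)^{-1/2} < √n`. -/
theorem stmt_8 (k n : ℕ) (t : Fin (k + 1) → ℕ)
    (hsum : ∑ j, t j = n) (hmax : ∀ j, t j < n) :
    ((n ! : ℝ) / n ^ n) * ∏ j ∈ Finset.univ.filter (fun j => 0 < t j),
        ((t j : ℝ) ^ t j / (t j)!) ≤
      (Real.sqrt n / Real.sqrt (2 * Real.pi)) *
        ∏ j ∈ Finset.univ.filter (fun j => 0 < t j), (1 / Real.sqrt (t j)) ∧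
    (Real.sqrt n / Real.sqrt (2 * Real.pi)) *
        ∏ j ∈ Finset.univ.filter (fun j => 0 < t j), (1 / Real.sqrt (t j)) <
      Real.sqrt n := by
  set S := univ.filter fun j => 0 < t j
  obtain ⟨i, j, hij, hi, hj⟩ := exists_ne_pos_of_sum_eq hsum hmax
  have hn : 0 < n := hi.trans (hmax i)
  have hS : ∀ j ∈ S, t j ≠ 0 := fun j hj => (mem_filter.1 hj).2.ne'
  have hSsum : ∑ j ∈ S, t j = n := by
    rw [sum_filter_of_ne fun j _ hj => pos_of_ne_zero hj, hsum]
  have hprod_ge := sqrt_two_pi_mul_stirlingRatio_le_prod hS (fun j _ => (hmax j).le)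
    (mem_filter.2 ⟨mem_univ i, hi⟩) (mem_filter.2 ⟨mem_univ j, hj⟩) hij
  have hprod : 0 < ∏ j ∈ S, stirlingRatio (t j) := hprod_ge.trans_lt' <|
    mul_pos (by positivity) (by linarith [sqrt_two_pi_le_stirlingRatio hn.ne', one_lt_sqrt_two_pi])
  have hratio : stirlingRatio n / ∏ j ∈ S, stirlingRatio (t j) ≤ 1 / √(2 * π) := by
    rw [div_le_div_iff₀ hprod (by positivity)]
    linarith
  rw [factorial_div_pow_self_mul_prod_eq hS hn.ne' hSsum]
  constructor
  · calc _ ≤ 1 / √(2 * π) * (√n * ∏ j ∈ S, (1 / √(t j))) :=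
          mul_le_mul_of_nonneg_right hratio (by positivity)
      _ = √n / √(2 * π) * ∏ j ∈ S, (1 / √(t j)) := by ring
  · calc √n / √(2 * π) * ∏ j ∈ S, (1 / √(t j)) ≤ √n / √(2 * π) :=
          mul_le_of_le_one_right (by positivity) (prod_one_div_sqrt_le_one hS)
      _ < √n := div_lt_self (sqrt_pos.2 (by exact_mod_cast hn)) one_lt_sqrt_two_pi
end

section
/- Let r = (r_1,...,r_{k+1}) be a probability vector with all r_i > 0, and for positive integer n define c_{n,i}(r) = ⌊n r_i + 1/2⌋ / n. Then Σ_{i=1}^{k+1} c_{n,i}(r) log(r_i / c_{n,i}(r)) ≥ −(k+1)/(2n) − (1/(4n^2)) Σ_{i=1}^{k+1} 1/r_i, for all n large enough that ⌊n r_i + 1/2⌋ ≥ 1 for every i. -/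
open Finset

/-- `log x ≤ x - 1` at `x = c / ρ`, rewritten so that the error is quadratic in `c - ρ`. -/
lemma sub_sub_sq_div_le_mul_log_div {ρ c : ℝ} (hρ : 0 < ρ) (hc : 0 < c) :
    (ρ - c) - (c - ρ) ^ 2 / ρ ≤ c * Real.log (ρ / c) := by
  have hlog : Real.log (c / ρ) ≤ c / ρ - 1 := Real.log_le_sub_one_of_pos (div_pos hc hρ)
  rw [← inv_div c ρ, Real.log_inv]
  calc (ρ - c) - (c - ρ) ^ 2 / ρ = c * (1 - c / ρ) := by field_simp; ring
    _ ≤ c * -Real.log (c / ρ) := by gcongr; linarith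

lemma neg_sub_sq_div_le_mul_log_div {ρ c δ : ℝ} (hρ : 0 < ρ) (hc : 0 < c)
    (hδ : |c - ρ| ≤ δ) :
    -δ - δ ^ 2 / ρ ≤ c * Real.log (ρ / c) := by
  have hsq : (c - ρ) ^ 2 ≤ δ ^ 2 := sq_le_sq' (abs_le.mp hδ).1 (abs_le.mp hδ).2
  have hlin : -δ ≤ ρ - c := by linarith [(abs_le.mp hδ).2]
  calc -δ - δ ^ 2 / ρ ≤ (ρ - c) - (c - ρ) ^ 2 / ρ := by gcongr
    _ ≤ c * Real.log (ρ / c) := sub_sub_sq_div_le_mul_log_div hρ hc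

lemma abs_floor_add_half_div_sub_le {n : ℝ} (hn : 0 < n) (x : ℝ) :
    |(⌊n * x + 1 / 2⌋ : ℝ) / n - x| ≤ 1 / (2 * n) := by
  have hround : |(⌊n * x + 1 / 2⌋ : ℝ) - n * x| ≤ 1 / 2 := by
    rw [← round_eq, abs_sub_comm]
    exact abs_sub_round _
  calc |(⌊n * x + 1 / 2⌋ : ℝ) / n - x| = |(⌊n * x + 1 / 2⌋ : ℝ) - n * x| / n := by
        rw [← abs_of_pos hn, ← abs_div, abs_of_pos hn, sub_div, mul_div_cancel_left₀ _ hn.ne']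
    _ ≤ (1 / 2) / n := by gcongr
    _ = 1 / (2 * n) := by rw [div_div]

theorem stmt_10_general (k : ℕ) (r : Fin (k + 1) → ℝ)
    (hr : ∀ i, 0 < r i)
    (n : ℕ) (hn : 0 < n) (hfloor : ∀ i, 1 ≤ ⌊(n : ℝ) * r i + 1 / 2⌋) :
    ∑ i, ((⌊(n : ℝ) * r i + 1 / 2⌋ : ℝ) / n) *
        Real.log (r i / ((⌊(n : ℝ) * r i + 1 / 2⌋ : ℝ) / n)) ≥
      -((k + 1 : ℝ) / (2 * n)) - (1 / (4 * (n : ℝ) ^ 2)) * ∑ i, 1 / r i := by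
  have hN : (0 : ℝ) < n := Nat.cast_pos.mpr hn
  have hrhs : -((k + 1 : ℝ) / (2 * n)) - (1 / (4 * (n : ℝ) ^ 2)) * ∑ i, 1 / r i =
      ∑ i, (-(1 / (2 * (n : ℝ))) - (1 / (2 * (n : ℝ))) ^ 2 / r i) := by
    simp only [sum_sub_distrib, sum_const, card_univ, Fintype.card_fin, nsmul_eq_mul, mul_sum]
    push_cast
    congr 1
    · ring
    · exact sum_congr rfl fun i _ => by ring
  rw [ge_iff_le, hrhs]
  refine sum_le_sum fun i _ => neg_sub_sq_div_le_mul_log_div (hr i) ?_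
    (abs_floor_add_half_div_sub_le hN (r i))
  have hfloor_pos : (0 : ℝ) < ⌊(n : ℝ) * r i + 1 / 2⌋ := by exact_mod_cast hfloor i
  exact div_pos hfloor_pos hN

/-- For a positive probability vector `r` and `c_{n,i} = ⌊n r i + 1/2⌋ / n`, as soon as
`n` is large enough that every `⌊n r i + 1/2⌋ ≥ 1`,
`∑ i, c_{n,i} log (r i / c_{n,i}) ≥ -(k+1)/(2n) - (1/(4n²)) ∑ i, 1/r i`. -/
theorem stmt_10 (k : ℕ) (r : Fin (k + 1) → ℝ)
    (hr : ∀ i, 0 < r i) (hsum : ∑ i, r i = 1)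
    (n : ℕ) (hn : 0 < n) (hfloor : ∀ i, 1 ≤ ⌊(n : ℝ) * r i + 1 / 2⌋) :
    ∑ i, ((⌊(n : ℝ) * r i + 1 / 2⌋ : ℝ) / n) *
        Real.log (r i / ((⌊(n : ℝ) * r i + 1 / 2⌋ : ℝ) / n)) ≥
      -((k + 1 : ℝ) / (2 * n)) - (1 / (4 * (n : ℝ) ^ 2)) * ∑ i, 1 / r i :=
  stmt_10_general k r hr n hn hfloor
end

section
/- Let r be a probability vector in R^{k+1} with all r_i > 0, s > 0, and define the rounded vector c_n(r) with c_{n,i}(r) = ⌊n r_i + 1/2⌋/n and the KL-neighborhood G_{n,s}(r) = {θ in the open simplex : KL(c_n(r) || θ) < (k+1+s) log(n) / n}. Then for every ε > 0 there exists N such that for all n > N, r ∈ G_{n,s}(r) and G_{n,s}(r) ⊆ B_ε(r) (the Euclidean ball of radius ε around r). -/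
/-!
Rounding moves every coordinate by at most `1 / (2n)`. Since `x log (x / y) ≤ x (x - y) / y`,
this gives `KL(c_n(r) ‖ r) ≤ (∑ 1 / rᵢ) / n`, which is eventually below `(k + 1 + s) log n / n`.
Conversely, each generalised KL term `x log (x / y) - x + y` dominates `(x - y)² / (2 max x y)`,
so a Pinsker-type inequality bounds `‖θ - c_n(r)‖²` by `4 (KL(c_n(r) ‖ θ) + (k + 1) / (2n))`,
which tends to `0` on `G_{n,s}(r)`; together with `‖c_n(r) - r‖ → 0` this gives `θ → r`.
-/

open Finset Filter Real Topology

lemma sq_sub_div_le_mul_log_div_sub_add {x y : ℝ} (hx : 0 ≤ x) (hy : 0 < y) :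
    (x - y) ^ 2 / (2 * max x y) ≤ x * log (x / y) - x + y := by
  rcases le_total y x with hyx | hxy
  · rw [max_eq_left hyx]
    have hx0 : 0 < x := hy.trans_le hyx
    have hlog : 2 * (x - y) / (x + y) ≤ log (x / y) := by
      have h := le_log_one_add_of_nonneg (x := x / y - 1)
        (by rw [sub_nonneg, one_le_div hy]; exact hyx)
      convert h using 1
      · field_simp; ring
      · ring_nf
    calc (x - y) ^ 2 / (2 * x) ≤ (x - y) ^ 2 / (x + y) := by gcongr; linarith
      _ = x * (2 * (x - y) / (x + y)) - x + y := by field_simp; ring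
      _ ≤ _ := by gcongr
  · rw [max_eq_right hxy]
    rcases hx.eq_or_lt with rfl | hx0
    · simp only [zero_sub, even_two, Even.neg_pow, zero_div, log_zero, mul_zero]
      rw [div_le_iff₀ (by positivity)]
      nlinarith
    have hlog : log (y / x) ≤ (y / x - (y / x)⁻¹) / 2 := by
      rw [← sinh_log (by positivity)]
      exact self_le_sinh_iff.2 (log_nonneg ((one_le_div hx0).2 hxy))
    calc (x - y) ^ 2 / (2 * y) = y - x - x * ((y / x - (y / x)⁻¹) / 2) := by field_simp; ring
      _ ≤ y - x - x * log (y / x) := by gcongr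
      _ = _ := by rw [show log (x / y) = -log (y / x) by rw [← log_inv, inv_div]]; ring

section KL

variable {ι : Type*} [Fintype ι]

noncomputable def klSum (p q : ι → ℝ) : ℝ := ∑ i, p i * log (p i / q i)

lemma klSum_le_of_abs_sub_le {p q : ι → ℝ} {M δ : ℝ} (hp : ∀ i, 0 ≤ p i)
    (hpM : ∀ i, p i ≤ M) (hq : ∀ i, 0 < q i) (hpq : ∀ i, |p i - q i| ≤ δ) :
    klSum p q ≤ M * δ * ∑ i, (q i)⁻¹ := by
  rw [klSum, mul_sum]
  refine sum_le_sum fun i _ => ?_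
  have hq0 := hq i
  have hM : 0 ≤ M := (hp i).trans (hpM i)
  have hδ : 0 ≤ δ := (abs_nonneg _).trans (hpq i)
  rcases (hp i).eq_or_lt with hp0 | hp0
  · rw [← hp0, zero_mul]
    positivity
  calc p i * log (p i / q i) ≤ p i * (p i / q i - 1) :=
        mul_le_mul_of_nonneg_left (log_le_sub_one_of_pos (by positivity)) hp0.le
    _ = p i * (p i - q i) / q i := by field_simp
    _ ≤ M * δ / q i := by
        refine div_le_div_of_nonneg_right ?_ hq0.le
        calc p i * (p i - q i) ≤ p i * |p i - q i| := by gcongr; exact le_abs_self _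
          _ ≤ M * δ := mul_le_mul (hpM i) (hpq i) (abs_nonneg _) (hp0.le.trans (hpM i))
    _ = M * δ * (q i)⁻¹ := div_eq_mul_inv _ _

lemma sum_sq_sub_le_klSum {p q : ι → ℝ} {M : ℝ} (hp : ∀ i, 0 ≤ p i)
    (hpM : ∀ i, p i ≤ M) (hq : ∀ i, 0 < q i) (hqM : ∀ i, q i ≤ M) :
    ∑ i, (p i - q i) ^ 2 ≤ 2 * M * (klSum p q - ∑ i, p i + ∑ i, q i) := by
  have hterm :
      klSum p q - ∑ i, p i + ∑ i, q i = ∑ i, (p i * log (p i / q i) - p i + q i) := by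
    rw [klSum, sum_add_distrib, sum_sub_distrib]
  rw [hterm, mul_sum]
  refine sum_le_sum fun i _ => ?_
  have hmax : 0 < max (p i) (q i) := lt_max_of_lt_right (hq i)
  have hbound := sq_sub_div_le_mul_log_div_sub_add (hp i) (hq i)
  calc (p i - q i) ^ 2 = 2 * max (p i) (q i) * ((p i - q i) ^ 2 / (2 * max (p i) (q i))) := by
        field_simp
    _ ≤ 2 * M * (p i * log (p i / q i) - p i + q i) :=
        mul_le_mul (by gcongr; exact max_le (hpM i) (hqM i)) hbound (by positivity)
          (by linarith [hq i, hqM i])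

end KL

section LatticeRound

variable {ι : Type*}

/-- `c_n(r)`: each coordinate of `r` rounded to the nearest point of `ℤ / n`. -/
noncomputable def latticeRound (n : ℕ) (r : ι → ℝ) : ι → ℝ :=
  fun i => (⌊(n : ℝ) * r i + 1 / 2⌋ : ℝ) / n

lemma latticeRound_nonneg (n : ℕ) {r : ι → ℝ} {i : ι} (hr : 0 ≤ r i) :
    0 ≤ latticeRound n r i :=
  div_nonneg (Int.cast_nonneg (Int.floor_nonneg.2 (by positivity))) n.cast_nonneg

lemma abs_latticeRound_sub_le {n : ℕ} (hn : 0 < n) (r : ι → ℝ) (i : ι) :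
    |latticeRound n r i - r i| ≤ 1 / (2 * n) := by
  have hn' : (0 : ℝ) < n := Nat.cast_pos.2 hn
  have hround := abs_sub_round ((n : ℝ) * r i)
  rw [round_eq, abs_sub_comm] at hround
  have hdiff :
      latticeRound n r i - r i = ((⌊(n : ℝ) * r i + 1 / 2⌋ : ℝ) - n * r i) / n := by
    rw [latticeRound]; field_simp
  rw [hdiff, abs_div, abs_of_pos hn', div_le_div_iff₀ hn' (by positivity)]
  nlinarith

variable {r : ι → ℝ} {n : ℕ}

lemma latticeRound_le_two (hn : 0 < n) (hr : ∀ i, r i ≤ 1) (i : ι) :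
    latticeRound n r i ≤ 2 := by
  have hn' : (1 : ℝ) ≤ n := Nat.one_le_cast.2 hn
  have h := (abs_le.1 (abs_latticeRound_sub_le hn r i)).2
  have : 1 / (2 * (n : ℝ)) ≤ 1 := by rw [div_le_one (by positivity)]; linarith
  linarith [hr i]

variable [Fintype ι]

lemma klSum_latticeRound_le (hn : 0 < n) (hr : ∀ i, 0 < r i) (hr1 : ∀ i, r i ≤ 1) :
    klSum (latticeRound n r) r ≤ (∑ i, (r i)⁻¹) / n := by
  calc klSum (latticeRound n r) r ≤ 2 * (1 / (2 * n)) * ∑ i, (r i)⁻¹ :=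
        klSum_le_of_abs_sub_le (fun i => latticeRound_nonneg n (hr i).le)
          (latticeRound_le_two hn hr1) hr (abs_latticeRound_sub_le hn r)
    _ = (∑ i, (r i)⁻¹) / n := by field_simp

lemma sum_sq_sub_le_klSum_latticeRound (hn : 0 < n) (hr : ∀ i, 0 < r i) (hsum : ∑ i, r i = 1)
    {θ : ι → ℝ} (hθ : ∀ i, 0 < θ i) (hθsum : ∑ i, θ i = 1) :
    ∑ i, (θ i - r i) ^ 2 ≤
      8 * (klSum (latticeRound n r) θ + Fintype.card ι / (2 * n)) +
        Fintype.card ι / (2 * n ^ 2) := by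
  set c := latticeRound n r
  have hle_one {v : ι → ℝ} (hv : ∀ i, 0 < v i) (hvsum : ∑ i, v i = 1) (i : ι) :
      v i ≤ 1 :=
    hvsum ▸ single_le_sum (fun j _ => (hv j).le) (mem_univ i)
  have hcr := abs_latticeRound_sub_le hn r
  have hc_sum : 1 - Fintype.card ι / (2 * n) ≤ ∑ i, c i := by
    have : ∑ i, (r i - c i) ≤ ∑ _i : ι, 1 / (2 * (n : ℝ)) :=
      sum_le_sum fun i _ => by linarith [(abs_le.1 (hcr i)).1]
    rw [sum_sub_distrib, hsum, sum_const, card_univ, nsmul_eq_mul, mul_one_div] at this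
    linarith
  have hcθ : ∑ i, (c i - θ i) ^ 2 ≤ 2 * 2 * (klSum c θ - ∑ i, c i + ∑ i, θ i) :=
    sum_sq_sub_le_klSum (fun i => latticeRound_nonneg n (hr i).le)
      (latticeRound_le_two hn (hle_one hr hsum)) hθ
      (fun i => (hle_one hθ hθsum i).trans one_le_two)
  have hcr2 : ∑ i, (c i - r i) ^ 2 ≤ Fintype.card ι * (1 / (2 * n)) ^ 2 := by
    rw [← nsmul_eq_mul, ← card_univ, ← sum_const]
    exact sum_le_sum fun i _ => sq_le_sq' (abs_le.1 (hcr i)).1 (abs_le.1 (hcr i)).2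
  calc ∑ i, (θ i - r i) ^ 2 ≤ ∑ i, (2 * (c i - θ i) ^ 2 + 2 * (c i - r i) ^ 2) :=
        sum_le_sum fun i _ => by nlinarith [sq_nonneg (c i - θ i + (c i - r i))]
    _ = 2 * ∑ i, (c i - θ i) ^ 2 + 2 * ∑ i, (c i - r i) ^ 2 := by
        rw [sum_add_distrib, mul_sum, mul_sum]
    _ ≤ _ := by
        rw [hθsum] at hcθ
        have : 2 * (Fintype.card ι * (1 / (2 * (n : ℝ))) ^ 2) =
            Fintype.card ι / (2 * n ^ 2) := by
          field_simp
        linarith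

end LatticeRound

/-- For a positive probability vector `r` and `s > 0`, with `c_n(r)` the rounded
empirical vector and `G_{n,s}(r)` the KL-neighbourhood
`{θ : KL(c_n(r) ‖ θ) < (k+1+s) log n / n}` of `c_n(r)` in the open simplex, for every
`ε > 0` eventually `r ∈ G_{n,s}(r)` and `G_{n,s}(r) ⊆ B_ε(r)`. -/
theorem stmt_11 (k : ℕ) (r : Fin (k + 1) → ℝ)
    (hr : ∀ i, 0 < r i) (hsum : ∑ i, r i = 1) (s : ℝ) (hs : 0 < s) :
    ∀ ε > 0, ∃ N : ℕ, ∀ n : ℕ, N < n →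
      (∑ i, ((⌊(n : ℝ) * r i + 1 / 2⌋ : ℝ) / n) *
          Real.log (((⌊(n : ℝ) * r i + 1 / 2⌋ : ℝ) / n) / r i) <
        ((k : ℝ) + 1 + s) * Real.log n / n) ∧
      ∀ θ : Fin (k + 1) → ℝ, (∀ i, 0 < θ i) → ∑ i, θ i = 1 →
        (∑ i, ((⌊(n : ℝ) * r i + 1 / 2⌋ : ℝ) / n) *
            Real.log (((⌊(n : ℝ) * r i + 1 / 2⌋ : ℝ) / n) / θ i) <
          ((k : ℝ) + 1 + s) * Real.log n / n) →
        Real.sqrt (∑ i, (θ i - r i) ^ 2) < ε := by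
  intro ε hε
  have hr1 (i : Fin (k + 1)) : r i ≤ 1 :=
    hsum ▸ single_le_sum (fun j _ => (hr j).le) (mem_univ i)
  have hlog : ∀ᶠ n : ℕ in atTop, ∑ i, (r i)⁻¹ < ((k : ℝ) + 1 + s) * log n :=
    ((tendsto_log_atTop.comp tendsto_natCast_atTop_atTop).const_mul_atTop
      (by positivity)).eventually_gt_atTop _
  have hsmall : ∀ᶠ n : ℕ in atTop, 8 * (((k : ℝ) + 1 + s) * log n / n + (k + 1) / (2 * n)) +
      (k + 1) / (2 * n ^ 2) < ε ^ 2 := by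
    refine Tendsto.eventually_lt_const (by positivity) ?_
    have hlogdiv : Tendsto (fun n : ℕ => log n / n) atTop (𝓝 0) :=
      isLittleO_log_id_atTop.tendsto_div_nhds_zero.comp tendsto_natCast_atTop_atTop
    have hinv : Tendsto (fun n : ℕ => (n : ℝ)⁻¹) atTop (𝓝 0) :=
      tendsto_inv_atTop_nhds_zero_nat
    have h := (((hlogdiv.const_mul ((k : ℝ) + 1 + s)).add
      (hinv.const_mul (((k : ℝ) + 1) / 2))).const_mul 8).add
      ((hinv.pow 2).const_mul (((k : ℝ) + 1) / 2))
    simp only [mul_zero, add_zero, ne_eq, OfNat.ofNat_ne_zero, not_false_eq_true, zero_pow] at h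
    exact h.congr fun n => by ring
  obtain ⟨N, hN⟩ := eventually_atTop.1 (hlog.and (hsmall.and (eventually_gt_atTop 0)))
  refine ⟨N, fun n hn => ?_⟩
  obtain ⟨hlog_n, hsmall_n, hn0⟩ := hN n hn.le
  refine ⟨?_, fun θ hθ hθsum hKL => ?_⟩
  · change klSum (latticeRound n r) r < _
    calc klSum (latticeRound n r) r ≤ (∑ i, (r i)⁻¹) / n := klSum_latticeRound_le hn0 hr hr1
      _ < _ := by gcongr
  · change klSum (latticeRound n r) θ < _ at hKL
    have h := sum_sq_sub_le_klSum_latticeRound hn0 hr hsum hθ hθsum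
    rw [Fintype.card_fin, Nat.cast_add, Nat.cast_one] at h
    rw [Real.sqrt_lt' hε]
    linarith
end

section
/- For the symmetric trine constraint set Θ = {(θ_1, θ_2) : θ_1 > 0, θ_2 > 0, θ_1 + θ_2 < 1, θ_1^2 + θ_2^2 + (1 − θ_1 − θ_2)^2 ≤ 1/2}, the area of Θ (i.e., its probability under the uniform distribution on the open simplex Θ_2 times the simplex area 1/2) satisfies: the uniform-prior probability of Θ equals π/(3√3) ≈ 0.6046. -/
/-! In barycentric coordinates the constraint `θ₁² + θ₂² + θ₃² ≤ 1/2` is the incircle of the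
simplex, tangent to each side at its midpoint, and the incircle of an equilateral triangle covers
the fraction `π/(3√3)` of it. In the chart `(θ₁, θ₂)` the incircle is the ellipse
`2u² + 2uv + 2v² ≤ 1/6` around `(1/3, 1/3)`, of area `π/(6√3)` (a linear change of variables of
determinant `√3` turns it into a disc), and it meets the complement of the open triangle of
area `1/2` only in the three midpoints. -/

open MeasureTheory Real

theorem volume_setOf_sq_add_sq_le {r : ℝ} (hr : 0 ≤ r) :
    volume {p : ℝ × ℝ | p.1 ^ 2 + p.2 ^ 2 ≤ r} = ENNReal.ofReal (π * r) := by
  have hball : Complex.measurableEquivRealProd ⁻¹' {p : ℝ × ℝ | p.1 ^ 2 + p.2 ^ 2 ≤ r} =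
      Metric.closedBall 0 √r := by
    ext z
    rw [Set.mem_preimage, Set.mem_ofPred_eq, Complex.measurableEquivRealProd_apply,
      mem_closedBall_zero_iff, Real.le_sqrt (norm_nonneg z) hr, ← Complex.normSq_eq_norm_sq,
      Complex.normSq_apply, sq, sq]
  rw [← Complex.volume_preserving_equiv_real_prod.measure_preimage
      (measurableSet_le (by fun_prop) measurable_const).nullMeasurableSet, hball,
    Complex.volume_closedBall, ← ENNReal.ofReal_pow (sqrt_nonneg r), sq_sqrt hr,
    ← ENNReal.ofReal_coe_nnreal, NNReal.coe_real_pi, ← ENNReal.ofReal_mul hr, mul_comm]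

theorem volume_setOf_quadratic_le {a b c r : ℝ} (ha : 0 < a) (hdisc : 0 < a * c - b ^ 2)
    (hr : 0 ≤ r) :
    volume {p : ℝ × ℝ | a * p.1 ^ 2 + 2 * b * p.1 * p.2 + c * p.2 ^ 2 ≤ r} =
      ENNReal.ofReal (π * r / √(a * c - b ^ 2)) := by
  set s := √a
  set u := √((a * c - b ^ 2) / a)
  have hs : s ^ 2 = a := sq_sqrt ha.le
  have hu : u ^ 2 = (a * c - b ^ 2) / a := sq_sqrt (by positivity)
  have hs0 : s ≠ 0 := (sqrt_pos.2 ha).ne'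
  set T := Matrix.toLin (Module.Basis.finTwoProd ℝ) (Module.Basis.finTwoProd ℝ) !![s, b / s; 0, u]
  have hdet : LinearMap.det T = √(a * c - b ^ 2) := by
    rw [LinearMap.det_toLin, Matrix.det_fin_two_of, mul_zero, sub_zero, ← sqrt_mul ha.le,
      mul_div_cancel₀ _ ha.ne']
  have hpre : T ⁻¹' {q : ℝ × ℝ | q.1 ^ 2 + q.2 ^ 2 ≤ r} =
      {p : ℝ × ℝ | a * p.1 ^ 2 + 2 * b * p.1 * p.2 + c * p.2 ^ 2 ≤ r} := by
    ext p
    -- completing the square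
    have : (s * p.1 + b / s * p.2) ^ 2 + (0 * p.1 + u * p.2) ^ 2 =
        a * p.1 ^ 2 + 2 * b * p.1 * p.2 + c * p.2 ^ 2 := by
      rw [← hs] at hu ⊢
      field_simp at hu ⊢
      linear_combination p.2 ^ 2 * hu
    simp only [Set.mem_preimage, Set.mem_ofPred_eq, T, Matrix.toLin_finTwoProd_apply, this]
  have hdet_pos : 0 < √(a * c - b ^ 2) := sqrt_pos.2 hdisc
  rw [← hpre, Measure.addHaar_preimage_linearMap _ (hdet ▸ hdet_pos.ne'), hdet,
    volume_setOf_sq_add_sq_le hr, abs_of_pos (inv_pos.2 hdet_pos),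
    ← ENNReal.ofReal_mul (inv_pos.2 hdet_pos).le, inv_mul_eq_div]

theorem volume_setOf_pos_pos_add_lt_one :
    volume {p : ℝ × ℝ | 0 < p.1 ∧ 0 < p.2 ∧ p.1 + p.2 < 1} = ENNReal.ofReal (1 / 2) := by
  have hregion : {p : ℝ × ℝ | 0 < p.1 ∧ 0 < p.2 ∧ p.1 + p.2 < 1} =
      regionBetween (fun _ => 0) (fun x => 1 - x) (Set.Ioo 0 1) := by
    ext ⟨x, y⟩
    simp only [regionBetween, Set.mem_ofPred_eq, Set.mem_Ioo]
    constructor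
    · rintro ⟨hx, hy, hxy⟩
      exact ⟨⟨hx, by linarith⟩, hy, by linarith⟩
    · rintro ⟨⟨hx, -⟩, hy, hxy⟩
      exact ⟨hx, hy, by linarith⟩
  rw [hregion, Measure.volume_eq_prod, volume_regionBetween_eq_integral
    (integrableOn_const measure_Ioo_lt_top.ne)
    ((intervalIntegrable_iff_integrableOn_Ioo_of_le zero_le_one).1
      (intervalIntegrable_const.sub intervalIntegral.intervalIntegrable_id)) measurableSet_Ioo
    (fun x hx => by linarith [hx.2]),
    ← integral_Ioc_eq_integral_Ioo, ← intervalIntegral.integral_of_le zero_le_one]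
  simp only [Pi.sub_apply, sub_zero, intervalIntegral.integral_comp_sub_left (fun x => x),
    integral_id]
  norm_num

theorem trine_diff_simplex_subset :
    {p : ℝ × ℝ | p.1 ^ 2 + p.2 ^ 2 + (1 - p.1 - p.2) ^ 2 ≤ 1 / 2} \
        {p | 0 < p.1 ∧ 0 < p.2 ∧ p.1 + p.2 < 1} ⊆ {(1 / 2, 0), (0, 1 / 2), (1 / 2, 1 / 2)} := by
  rintro ⟨x, y⟩ ⟨hq, hS⟩
  simp only [Set.mem_ofPred_eq, not_and_or, not_lt] at hq hS
  simp only [Set.mem_insert_iff, Set.mem_singleton_iff, Prod.mk.injEq]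
  rcases hS with hx | hy | hxy
  · right; left
    have hx0 : x = 0 := by nlinarith [sq_nonneg (2 * y + x - 1)]
    subst hx0
    exact ⟨rfl, by nlinarith [sq_nonneg (2 * y - 1)]⟩
  · left
    have hy0 : y = 0 := by nlinarith [sq_nonneg (2 * x + y - 1)]
    subst hy0
    exact ⟨by nlinarith [sq_nonneg (2 * x - 1)], rfl⟩
  · right; right
    have hxy1 : x + y = 1 := by nlinarith [sq_nonneg (x - y)]
    have : x = 1 / 2 := by nlinarith [sq_nonneg (2 * x - 1)]
    exact ⟨this, by linarith⟩

theorem volume_trine_ellipse :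
    volume {p : ℝ × ℝ | p.1 ^ 2 + p.2 ^ 2 + (1 - p.1 - p.2) ^ 2 ≤ 1 / 2} =
      ENNReal.ofReal (π / (6 * √3)) := by
  have hcentered : {p : ℝ × ℝ | p.1 ^ 2 + p.2 ^ 2 + (1 - p.1 - p.2) ^ 2 ≤ 1 / 2} =
      (· + (-(1 / 3), -(1 / 3))) ⁻¹'
        {q : ℝ × ℝ | 2 * q.1 ^ 2 + 2 * 1 * q.1 * q.2 + 2 * q.2 ^ 2 ≤ 1 / 6} := by
    ext p
    simp only [Set.mem_preimage, Set.mem_ofPred_eq, Prod.fst_add, Prod.snd_add]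
    constructor <;> intro h <;> linarith
  rw [hcentered, measure_preimage_add_right, volume_setOf_quadratic_le two_pos (by norm_num)
    (by norm_num)]
  norm_num
  congr 1
  ring

theorem volume_trine_eq_volume_ellipse :
    volume {p : ℝ × ℝ | 0 < p.1 ∧ 0 < p.2 ∧ p.1 + p.2 < 1 ∧
        p.1 ^ 2 + p.2 ^ 2 + (1 - p.1 - p.2) ^ 2 ≤ 1 / 2} =
      volume {p : ℝ × ℝ | p.1 ^ 2 + p.2 ^ 2 + (1 - p.1 - p.2) ^ 2 ≤ 1 / 2} := by
  have hinter : {p : ℝ × ℝ | 0 < p.1 ∧ 0 < p.2 ∧ p.1 + p.2 < 1 ∧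
        p.1 ^ 2 + p.2 ^ 2 + (1 - p.1 - p.2) ^ 2 ≤ 1 / 2} =
      {p : ℝ × ℝ | p.1 ^ 2 + p.2 ^ 2 + (1 - p.1 - p.2) ^ 2 ≤ 1 / 2} ∩
        {p | 0 < p.1 ∧ 0 < p.2 ∧ p.1 + p.2 < 1} := by
    ext p
    simp only [Set.mem_inter_iff, Set.mem_ofPred_eq]
    tauto
  rw [hinter]
  exact measure_inter_conull'
    (measure_mono_null trine_diff_simplex_subset ((Set.toFinite _).measure_zero _))

/-- The uniform-prior probability (under the uniform distribution on the open
2-simplex) of the symmetric trine constraint set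
`{θ : θ_1² + θ_2² + (1 - θ_1 - θ_2)² ≤ 1/2}` equals `π/(3√3) ≈ 0.6046`. -/
theorem stmt_18 :
    volume {p : ℝ × ℝ | 0 < p.1 ∧ 0 < p.2 ∧ p.1 + p.2 < 1 ∧
        p.1 ^ 2 + p.2 ^ 2 + (1 - p.1 - p.2) ^ 2 ≤ 1 / 2} /
      volume {p : ℝ × ℝ | 0 < p.1 ∧ 0 < p.2 ∧ p.1 + p.2 < 1} =
    ENNReal.ofReal (Real.pi / (3 * Real.sqrt 3)) := by
  rw [volume_trine_eq_volume_ellipse, volume_trine_ellipse, volume_setOf_pos_pos_add_lt_one,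
    ← ENNReal.ofReal_div_of_pos one_half_pos]
  congr 1
  field_simp
  ring
end
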